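/- arXiv:2007.00870 — 3 statements merged into one kernel-verified Lean document; each statement's English description precedes it below -/
import Mathlib

section
/- For any strings x ∈ {0,1}^{pn}, y ∈ {0,1}^{n'}, any subset S ⊆ [n] with |S| = s, any hash functions h_j: {0,1}^p → {0,1}^q for j ∈ [n], and any k ∈ ℕ, the number of monotone matchings w = ((ρ₁,ρ'₁),...,(ρ_{|w|},ρ'_{|w|})) between the blocks of x indexed by S and substrings of y under the hash functions, satisfying |ρ'₁−ρ₁| + ∑_{i=2}^{|w|} |(ρ'_i−ρ'_{i−1}) − (ρ_i−ρ_{i−1})| ≤ k, is at most 2^{2s + k(log₂((k+s−1)/k) + log₂ e)}. -/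
open Finset Real

/-- Auxiliary shift-cost: given the previous matched pair `(pa, pb)`,
add `|(b' - pb) - (a' - pa)|` for each successive pair. -/
def costAux : ℤ → ℤ → List (ℤ × ℤ) → ℕ
  | _, _, [] => 0
  | pa, pb, (a, b) :: rest => ((b - pb) - (a - pa)).natAbs + costAux a b rest

/-- The shift-cost of a matching:
`|ρ'₁ − ρ₁| + ∑_{i≥2} |(ρ'_i − ρ'_{i−1}) − (ρ_i − ρ_{i−1})|`. -/
def shiftCost : List (ℤ × ℤ) → ℕ
  | [] => 0
  | (a, b) :: rest => (b - a).natAbs + costAux a b rest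

/-!
A matching is determined by the set of blocks it uses (a subset of `S`) together with its
sequence of shifts `(ρ'ᵢ - ρ'ᵢ₋₁) - (ρᵢ - ρᵢ₋₁)`: the blocks fix the `ρᵢ`, and the shifts then
recover the `ρ'ᵢ` one after another. Padded with zeros, the shift sequence is an integer vector
of length `s` and `ℓ¹`-norm at most `k`; recording the signs and, by stars and bars, the
absolute values, there are at most `2^s * C(s + k, k)` of these. Hence there are at most
`4^s * C(s + k, k)` matchings, and `C(s + k, k) ≤ (e (k + s - 1) / k)^k` because
`(m + 1)^k ≤ e m^k` for `k ≤ m` and `k^k ≤ e^(k-1) k!`.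
-/

def shifts : ℤ → ℤ → List (ℤ × ℤ) → List ℤ
  | _, _, [] => []
  | pa, pb, (a, b) :: rest => ((b - pb) - (a - pa)) :: shifts a b rest

theorem costAux_eq_sum_natAbs_shifts (pa pb : ℤ) (l : List (ℤ × ℤ)) :
    costAux pa pb l = ((shifts pa pb l).map Int.natAbs).sum := by
  induction l generalizing pa pb with
  | nil => rfl
  | cons u l ih => simp [costAux, shifts, ih]

theorem shiftCost_eq_costAux (l : List (ℤ × ℤ)) : shiftCost l = costAux 0 0 l := by
  cases l <;> simp [shiftCost, costAux]

theorem length_shifts (pa pb : ℤ) (l : List (ℤ × ℤ)) :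
    (shifts pa pb l).length = l.length := by
  induction l generalizing pa pb with
  | nil => rfl
  | cons u l ih => simp [shifts, ih]

theorem eq_of_map_fst_eq_of_shifts_eq {pa pb : ℤ} {u v : List (ℤ × ℤ)}
    (hfst : u.map Prod.fst = v.map Prod.fst) (hshifts : shifts pa pb u = shifts pa pb v) :
    u = v := by
  induction u generalizing v pa pb with
  | nil => exact (List.map_eq_nil_iff.mp hfst.symm).symm
  | cons a u ih =>
    obtain _ | ⟨b, v⟩ := v
    · simp at hfst
    obtain ⟨a₁, a₂⟩ := a
    obtain ⟨b₁, b₂⟩ := b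
    simp only [List.map_cons, List.cons.injEq, shifts] at hfst hshifts
    obtain ⟨rfl, hfst⟩ := hfst
    obtain rfl : a₂ = b₂ := by omega
    rw [ih hfst hshifts.2]

theorem sum_natAbs_getD_eq {s : ℕ} {l : List ℤ} (hl : l.length ≤ s) :
    ∑ i : Fin s, (l.getD i 0).natAbs = (l.map Int.natAbs).sum := by
  induction l generalizing s with
  | nil => simp
  | cons a l ih =>
    obtain ⟨s, rfl⟩ : ∃ t, s = t + 1 := ⟨s - 1, by simp at hl; omega⟩
    rw [Fin.sum_univ_succ]
    simp only [Fin.val_succ, List.getD_cons_succ, Fin.val_zero, List.getD_cons_zero,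
      ih (by simpa using hl), List.map_cons, List.sum_cons]

theorem eq_of_getD_eq {s : ℕ} {l l' : List ℤ} (hl : l.length ≤ s)
    (hlen : l.length = l'.length) (h : ∀ i : Fin s, l.getD i 0 = l'.getD i 0) : l = l' := by
  refine List.ext_getElem hlen fun i hi hi' => ?_
  rw [← List.getD_eq_getElem _ 0 hi, ← List.getD_eq_getElem _ 0 hi']
  exact h ⟨i, hi.trans_le hl⟩

theorem finite_setOf_sum_natAbs_le {ι : Type*} [Fintype ι] (k : ℕ) :
    {d : ι → ℤ | ∑ i, (d i).natAbs ≤ k}.Finite := by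
  refine (Set.Finite.pi fun _ => Set.finite_Icc (-(k : ℤ)) k).subset fun d hd i _ => ?_
  have : (d i).natAbs ≤ k := (single_le_sum (fun j _ => Nat.zero_le _) (mem_univ i)).trans hd
  simp only [Set.mem_Icc]
  omega

theorem ncard_setOf_sum_natAbs_le {ι : Type*} [Fintype ι] (k : ℕ) :
    {d : ι → ℤ | ∑ i, (d i).natAbs ≤ k}.ncard ≤
      2 ^ Fintype.card ι * (Fintype.card ι + k).choose k := by
  classical
  -- Stars and bars: `|d i|` copies of `some i` plus `k - ∑ i, |d i|` copies of `none`.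
  let counts (d : ι → ℤ) : Option ι →₀ ℕ :=
    Finsupp.equivFunOnFinite.symm fun o => o.elim (k - ∑ i, (d i).natAbs) fun i => (d i).natAbs
  let T := (univ : Finset (ι → Bool)) ×ˢ
    (univ : Finset (Sym (Option ι) k)).map ⟨Sym.toMultiset, Sym.coe_injective⟩
  have hT : #T = 2 ^ Fintype.card ι * (Fintype.card ι + k).choose k := by
    simp [T, Sym.card_sym_eq_choose]
  rw [← hT, ← Set.ncard_coe_finset]
  refine Set.ncard_le_ncard_of_injOn
    (fun d => (fun i => decide (0 ≤ d i), Finsupp.toMultiset (counts d))) ?_ ?_ T.finite_toSet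
  · intro d hd
    have hcard : Multiset.card (Finsupp.toMultiset (counts d)) = k := by
      simpa [counts, Finsupp.card_toMultiset, Finsupp.sum_fintype, Fintype.sum_option] using
        Nat.sub_add_cancel hd
    simpa [T] using ⟨⟨_, hcard⟩, rfl⟩
  · intro d _ d' _ h
    simp only [Prod.mk.injEq] at h
    funext i
    have hsign := congrFun h.1 i
    have hcount := congrArg (Multiset.count (some i)) h.2
    simp only [decide_eq_decide, Finsupp.count_toMultiset,
      Finsupp.equivFunOnFinite_symm_apply_apply, Option.elim_some, counts] at hsign hcount
    omega

theorem ncard_le_of_shiftCost_le {α : Type*} [LinearOrder α] (S : Finset α) (f : α → ℤ)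
    (k : ℕ) (W : Set (List (α × ℕ)))
    (hW : ∀ w ∈ W, w.IsChain (fun u v => u.1 < v.1) ∧ (∀ u ∈ w, u.1 ∈ S) ∧
      shiftCost (w.map fun u => (f u.1, (u.2 : ℤ))) ≤ k) :
    W.ncard ≤ 2 ^ (2 * #S) * (#S + k).choose k := by
  classical
  set g : α × ℕ → ℤ × ℤ := fun u => (f u.1, (u.2 : ℤ))
  set D : List (α × ℕ) → List ℤ := fun w => shifts 0 0 (w.map g)
  have hsorted : ∀ w ∈ W, (w.map Prod.fst).Pairwise (· < ·) := fun w hw =>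
    List.isChain_iff_pairwise.mp (List.isChain_map _ |>.mpr (hW w hw).1)
  have hlen : ∀ w ∈ W, w.length = #(w.map Prod.fst).toFinset := fun w hw => by
    rw [List.toFinset_card_of_nodup ((hsorted w hw).imp ne_of_lt), List.length_map]
  have hsub : ∀ w ∈ W, (w.map Prod.fst).toFinset ⊆ S := fun w hw a ha => by
    obtain ⟨u, hu, rfl⟩ := List.mem_map.mp (List.mem_toFinset.mp ha)
    exact (hW w hw).2.1 u hu
  have hDlen : ∀ w ∈ W, (D w).length ≤ #S := fun w hw => by
    simpa [D, length_shifts, hlen w hw] using card_le_card (hsub w hw)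
  calc W.ncard
      ≤ ((S.powerset : Set (Finset α)) ×ˢ {d : Fin #S → ℤ | ∑ i, (d i).natAbs ≤ k}).ncard := by
        refine Set.ncard_le_ncard_of_injOn
          (fun w => ((w.map Prod.fst).toFinset, fun i => (D w).getD i 0)) ?_ ?_
          (S.powerset.finite_toSet.prod (finite_setOf_sum_natAbs_le k))
        · intro w hw
          refine ⟨mem_powerset.mpr (hsub w hw), ?_⟩
          change ∑ i : Fin #S, ((D w).getD i 0).natAbs ≤ k
          rw [sum_natAbs_getD_eq (hDlen w hw), ← costAux_eq_sum_natAbs_shifts,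
            ← shiftCost_eq_costAux]
          exact (hW w hw).2.2
        · intro w hw w' hw' h
          simp only [Prod.mk.injEq, funext_iff] at h
          have hfst : w.map Prod.fst = w'.map Prod.fst :=
            (List.perm_of_nodup_nodup_toFinset_eq ((hsorted w hw).imp ne_of_lt)
              ((hsorted w' hw').imp ne_of_lt) h.1).eq_of_pairwise
              (fun a b _ _ hab hba => (lt_asymm hab hba).elim) (hsorted w hw) (hsorted w' hw')
          have hDlen' : (D w).length = (D w').length := by
            simp [D, length_shifts, hlen w hw, hlen w' hw', h.1]
          have hg : w.map g = w'.map g := by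
            refine eq_of_map_fst_eq_of_shifts_eq ?_ (eq_of_getD_eq (hDlen w hw) hDlen' h.2)
            have := congrArg (List.map f) hfst
            simp only [List.map_map] at this ⊢
            exact this
          have hsnd : w.map Prod.snd = w'.map Prod.snd := by
            refine (List.map_injective_iff.mpr (Nat.cast_injective (R := ℤ))) ?_
            have := congrArg (List.map Prod.snd) hg
            simp only [List.map_map] at this ⊢
            exact this
          exact (List.zip_of_prod hfst hsnd).trans (List.zip_of_prod rfl rfl).symm
    _ ≤ 2 ^ #S * (2 ^ #S * (#S + k).choose k) := by
        rw [Set.ncard_prod, Set.ncard_coe_finset, card_powerset]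
        exact Nat.mul_le_mul_left _ (by simpa using ncard_setOf_sum_natAbs_le (ι := Fin #S) k)
    _ = 2 ^ (2 * #S) * (#S + k).choose k := by ring

open scoped Nat

theorem add_one_pow_le_exp_one_mul_pow {k m : ℕ} (hkm : k ≤ m) :
    ((m : ℝ) + 1) ^ k ≤ exp 1 * (m : ℝ) ^ k := by
  rcases Nat.eq_zero_or_pos m with rfl | hm
  · obtain rfl : k = 0 := by omega
    simp
  have hm' : (0 : ℝ) < m := by exact_mod_cast hm
  calc ((m : ℝ) + 1) ^ k = (1 + (m : ℝ)⁻¹) ^ k * (m : ℝ) ^ k := by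
        rw [← mul_pow]; field_simp
    _ ≤ (1 + (m : ℝ)⁻¹) ^ m * (m : ℝ) ^ k := by
        gcongr
        exact le_add_of_nonneg_right (by positivity)
    _ ≤ exp 1 * (m : ℝ) ^ k := by gcongr; exact one_add_inv_pow_le_exp

theorem succ_pow_succ_le_exp_one_pow_mul_factorial (k : ℕ) :
    ((k : ℝ) + 1) ^ (k + 1) ≤ exp 1 ^ k * (k + 1)! := by
  induction k with
  | zero => simp
  | succ k ih =>
    push_cast at ih ⊢
    calc ((k : ℝ) + 1 + 1) ^ (k + 1 + 1)
        = ((k : ℝ) + 2) * ((k + 1 : ℕ) + 1 : ℝ) ^ (k + 1) := by push_cast; ring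
      _ ≤ ((k : ℝ) + 2) * (exp 1 * ((k : ℝ) + 1) ^ (k + 1)) := by
          gcongr; exact_mod_cast add_one_pow_le_exp_one_mul_pow le_rfl
      _ ≤ ((k : ℝ) + 2) * (exp 1 * (exp 1 ^ k * (k + 1)!)) := by gcongr
      _ = exp 1 ^ (k + 1) * (k + 1 + 1)! := by
          rw [Nat.factorial_succ (k + 1)]; push_cast; ring

theorem choose_succ_le_exp_one_mul_div_pow {k m : ℕ} (hk : 1 ≤ k) (hkm : k ≤ m) :
    ((m + 1).choose k : ℝ) ≤ (exp 1 * m / k) ^ k := by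
  obtain ⟨j, rfl⟩ : ∃ j, k = j + 1 := ⟨k - 1, by omega⟩
  have hpos : (0 : ℝ) < ((j + 1)! : ℝ) := by positivity
  calc ((m + 1).choose (j + 1) : ℝ) ≤ ((m : ℝ) + 1) ^ (j + 1) / (j + 1)! := by
        exact_mod_cast Nat.choose_le_pow_div (α := ℝ) (j + 1) (m + 1)
    _ ≤ exp 1 * (m : ℝ) ^ (j + 1) / (j + 1)! := by
        gcongr; exact add_one_pow_le_exp_one_mul_pow hkm
    _ ≤ (exp 1 * m / (j + 1 : ℕ)) ^ (j + 1) := by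
        rw [div_le_iff₀ hpos, div_pow, mul_pow, pow_succ (exp 1)]
        push_cast
        field_simp
        rw [mul_assoc]
        exact mul_le_mul_of_nonneg_left (succ_pow_succ_le_exp_one_pow_mul_factorial j)
          (by positivity)

theorem rpow_natCast_mul_logb {b x : ℝ} (hb : 0 < b) (hb₁ : b ≠ 1) (hx : 0 < x) (k : ℕ) :
    b ^ (k * logb b x) = x ^ k := by
  rw [mul_comm, rpow_mul hb.le, rpow_logb hb hb₁ hx, rpow_natCast]

theorem choose_add_le_two_rpow (s k : ℕ) :
    ((s + k).choose k : ℝ) ≤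
      2 ^ ((k : ℝ) * (logb 2 (((k : ℝ) + s - 1) / k) + logb 2 (exp 1))) := by
  rcases Nat.eq_zero_or_pos k with rfl | hk
  · simp
  have hk' : (0 : ℝ) < k := by exact_mod_cast hk
  rcases Nat.eq_zero_or_pos s with rfl | hs
  · rw [zero_add, Nat.choose_self, Nat.cast_one]
    refine one_le_rpow one_le_two (mul_nonneg hk'.le ?_)
    rcases (show 1 ≤ k from hk).eq_or_lt with rfl | hk2
    · -- the base of the first logarithm is `0`, and `logb 2 0 = 0`
      simpa using logb_nonneg one_lt_two (one_le_exp zero_le_one)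
    have hk2' : (2 : ℝ) ≤ k := by exact_mod_cast hk2
    rw [Nat.cast_zero, add_zero, ← logb_mul (div_pos (by linarith) hk').ne' (exp_pos 1).ne']
    refine logb_nonneg one_lt_two ?_
    rw [div_mul_eq_mul_div, one_le_div hk']
    nlinarith [add_one_le_exp (1 : ℝ)]
  obtain ⟨m, hm⟩ : ∃ m, k + s = m + 1 := ⟨k + s - 1, by omega⟩
  have hmR : (k : ℝ) + s - 1 = m := by
    have : ((k + s : ℕ) : ℝ) = ((m + 1 : ℕ) : ℝ) := congrArg _ hm
    push_cast at this; linarith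
  have hm0 : (0 : ℝ) < m := by exact_mod_cast (show 0 < m by omega)
  rw [hmR, ← logb_mul (by positivity) (exp_pos 1).ne',
    rpow_natCast_mul_logb two_pos (by norm_num) (by positivity), add_comm s, hm,
    div_mul_eq_mul_div, mul_comm (m : ℝ)]
  exact choose_succ_le_exp_one_mul_div_pow hk (by omega)

/-- The number of monotone matchings between the blocks of `x` indexed by `S` and
substrings of `y` under hash functions `h`, with shift-cost at most `k`, is at most
`2^{2s + k(log₂((k+s−1)/k) + log₂ e)}`. -/
theorem stmt_4 (p n n' q s k : ℕ)
    (x : Fin n → Fin p → Bool) (y : ℕ → Bool)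
    (S : Finset (Fin n)) (hS : S.card = s)
    (h : Fin n → (Fin p → Bool) → (Fin q → Bool)) :
    (Set.ncard {w : List (Fin n × ℕ) |
        List.Chain' (fun u v => u.1 < v.1 ∧ u.2 < v.2) w ∧
        (∀ u ∈ w, u.1 ∈ S ∧ u.2 + p ≤ n' ∧
          h u.1 (x u.1) = h u.1 (fun a => y (u.2 + a))) ∧
        shiftCost (w.map (fun u => (((u.1 : ℕ) * p : ℤ), (u.2 : ℤ)))) ≤ k} : ℝ) ≤
      (2 : ℝ) ^ (2 * (s : ℝ) +
        (k : ℝ) * (Real.logb 2 (((k : ℝ) + s - 1) / k) + Real.logb 2 (Real.exp 1))) := by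
  calc _ ≤ ((2 ^ (2 * s) * (s + k).choose k : ℕ) : ℝ) := by
        rw [← hS]
        refine Nat.cast_le.mpr (ncard_le_of_shiftCost_le S (fun i => ((i : ℕ) * p : ℤ)) k _ ?_)
        exact fun w hw =>
          ⟨hw.1.imp fun _ _ huv => huv.1, fun u hu => (hw.2.1 u hu).1, hw.2.2⟩
    _ ≤ 2 ^ ((2 * s : ℕ) : ℝ) *
          2 ^ ((k : ℝ) * (logb 2 (((k : ℝ) + s - 1) / k) + logb 2 (exp 1))) := by
        rw [rpow_natCast, Nat.cast_mul, Nat.cast_pow, Nat.cast_ofNat]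
        gcongr
        exact choose_add_le_two_rpow s k
    _ = _ := by rw [← rpow_add two_pos]; push_cast; rfl
end

section
/- Suppose k₁ ≥ k₂ ≥ ⋯ ≥ k_t ≥ 1 and s_i ≥ 2k_i for all i. In the iterative distance-reduction protocol, whenever an iteration processes index i with current residual bound k' ≤ 10·∑_{j>i−1} k_j (c = 10), the sketch length for that iteration, m = O((k'+k_i)·log(∑_{j≤i} s_j / (k'+k_i))), satisfies m = O(t · ∑_{j=1}^{t} k_j log(s_j/k_j)). Concretely: for any i ∈ [t] and any k' with k_i ≤ k'+k_i ≤ 11·∑_{j≥i} k_j, one has (k'+k_i)·log₂(∑_{j=1}^{i} s_j/(k'+k_i)) ≤ 33·t·∑_{j=1}^{t} k_j·log₂(s_j/k_j), assuming s_j ≥ 2k_j and k_1 ≥ ⋯ ≥ k_t ≥ 1. -/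
/-!
Put `K = k' + k_i` and `S = ∑_{j ≤ i} s_j`. Since `k_i ≤ K ≤ 11 t k_i`, the left side is
at most `11 t · k_i log₂ (S / k_i)`. For `j ≤ i` every ratio `s_j / k_i` is at least `2`, so
the logarithm of their sum is at most the sum of their logarithms. Finally
`k_i log₂ (s_j / k_i) ≤ 3 k_j log₂ (s_j / k_j)`, because `k_i ≤ k_j ≤ s_j / 2`: in
`log₂ (s_j / k_i) = log₂ (s_j / k_j) + log₂ (k_j / k_i)` the second term contributes at most
`k_j / ln 2 ≤ 2 k_j ≤ 2 k_j log₂ (s_j / k_j)`.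
-/

open Finset Real

theorem sum_le_prod_of_two_le {ι : Type*} {s : Finset ι} (hs : s.Nonempty) {f : ι → ℝ}
    (hf : ∀ j ∈ s, 2 ≤ f j) : ∑ j ∈ s, f j ≤ ∏ j ∈ s, f j := by
  induction hs using Finset.Nonempty.cons_induction with
  | singleton a => simp
  | cons a s _ hs ih =>
    have hfa : 2 ≤ f a := hf a (mem_cons_self a s)
    have hfs : ∀ j ∈ s, 2 ≤ f j := fun j hj => hf j (mem_cons_of_mem hj)
    obtain ⟨b, hb⟩ := hs
    have hsum : 2 ≤ ∑ j ∈ s, f j :=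
      (hfs b hb).trans (single_le_sum (fun j hj => by linarith [hfs j hj]) hb)
    rw [sum_cons, prod_cons]
    -- `u + v ≤ u * v` once `u, v ≥ 2`
    nlinarith [ih hfs]

theorem logb_two_sum_le_sum_logb_two {ι : Type*} {s : Finset ι} (hs : s.Nonempty) {f : ι → ℝ}
    (hf : ∀ j ∈ s, 2 ≤ f j) : logb 2 (∑ j ∈ s, f j) ≤ ∑ j ∈ s, logb 2 (f j) := by
  have hpos : ∀ j ∈ s, 0 < f j := fun j hj => by linarith [hf j hj]
  rw [← logb_prod _ _ fun j hj => (hpos j hj).ne']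
  exact logb_le_logb_of_le one_lt_two (sum_pos hpos hs) (sum_le_prod_of_two_le hs hf)

theorem one_le_logb_two_div {a b : ℝ} (ha : 0 < a) (hab : 2 * a ≤ b) :
    1 ≤ logb 2 (b / a) := by
  simpa using logb_le_logb_of_le one_lt_two two_pos ((le_div_iff₀ ha).mpr (by linarith))

theorem mul_logb_two_div_le {x y : ℝ} (hx : 0 < x) (hy : 0 < y) :
    x * logb 2 (y / x) ≤ 2 * y := by
  have hlog : x * log (y / x) ≤ y :=
    calc x * log (y / x) ≤ x * (y / x - 1) :=
          mul_le_mul_of_nonneg_left (log_le_sub_one_of_pos (div_pos hy hx)) hx.le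
      _ = y - x := by field_simp
      _ ≤ y := by linarith
  rw [logb, mul_div_assoc', div_le_iff₀ (log_pos one_lt_two)]
  -- `1 / log 2 < 2`
  nlinarith [log_two_gt_d9]

theorem mul_logb_two_div_le_three_mul {x y A : ℝ} (hx : 0 < x) (hxy : x ≤ y)
    (hA : 2 * y ≤ A) :
    x * logb 2 (A / x) ≤ 3 * (y * logb 2 (A / y)) := by
  have hy : 0 < y := hx.trans_le hxy
  have hL : 1 ≤ logb 2 (A / y) := one_le_logb_two_div hy hA
  have hsplit : logb 2 (A / x) = logb 2 (A / y) + logb 2 (y / x) := by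
    rw [← logb_mul (div_pos (by linarith) hy).ne' (div_pos hy hx).ne',
      div_mul_div_cancel₀ hy.ne']
  calc x * logb 2 (A / x) = x * logb 2 (A / y) + x * logb 2 (y / x) := by rw [hsplit, mul_add]
    _ ≤ y * logb 2 (A / y) + 2 * y :=
        add_le_add (mul_le_mul_of_nonneg_right hxy (by linarith)) (mul_logb_two_div_le hx hy)
    _ ≤ 3 * (y * logb 2 (A / y)) := by nlinarith

theorem mul_logb_two_sum_div_le {ι : Type*} {s : Finset ι} (hs : s.Nonempty) {a b : ι → ℝ}
    {x : ℝ} (hx : 0 < x) (hxa : ∀ j ∈ s, x ≤ a j) (hab : ∀ j ∈ s, 2 * a j ≤ b j) :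
    x * logb 2 ((∑ j ∈ s, b j) / x) ≤ 3 * ∑ j ∈ s, a j * logb 2 (b j / a j) := by
  have hb : ∀ j ∈ s, 2 ≤ b j / x := fun j hj => by
    rw [le_div_iff₀ hx]; linarith [hxa j hj, hab j hj]
  calc x * logb 2 ((∑ j ∈ s, b j) / x) ≤ x * ∑ j ∈ s, logb 2 (b j / x) := by
        rw [sum_div]; exact mul_le_mul_of_nonneg_left (logb_two_sum_le_sum_logb_two hs hb) hx.le
    _ = ∑ j ∈ s, x * logb 2 (b j / x) := mul_sum ..
    _ ≤ ∑ j ∈ s, 3 * (a j * logb 2 (b j / a j)) :=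
        sum_le_sum fun j hj => mul_logb_two_div_le_three_mul hx (hxa j hj) (hab j hj)
    _ = 3 * ∑ j ∈ s, a j * logb 2 (b j / a j) := (mul_sum ..).symm

theorem sum_Ici_le_card_mul {n : ℕ} {f : Fin n → ℕ} (hf : Antitone f) (i : Fin n) :
    ∑ j ∈ Ici i, f j ≤ n * f i :=
  calc ∑ j ∈ Ici i, f j ≤ #(Ici i) * f i :=
        sum_le_card_nsmul _ _ _ fun _ hj => hf (mem_Ici.mp hj)
    _ ≤ n * f i := Nat.mul_le_mul_right _ ((card_le_univ _).trans_eq (Fintype.card_fin n))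

theorem stmt_16_general (t : ℕ) (k s : Fin t → ℕ)
    (hmono : ∀ i j : Fin t, i ≤ j → k j ≤ k i)
    (hpos : ∀ i, 1 ≤ k i) (hsk : ∀ i, 2 * k i ≤ s i)
    (i : Fin t) (k' : ℕ)
    (hk' : k' + k i ≤ 11 * ∑ j ∈ Finset.Ici i, k j) :
    ((k' + k i : ℕ) : ℝ) *
        Real.logb 2 ((∑ j ∈ Finset.Iic i, (s j : ℝ)) / ((k' + k i : ℕ) : ℝ)) ≤
      33 * (t : ℝ) * ∑ j, (k j : ℝ) * Real.logb 2 ((s j : ℝ) / (k j : ℝ)) := by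
  set S : ℝ := ∑ j ∈ Iic i, (s j : ℝ)
  set K : ℝ := ((k' + k i : ℕ) : ℝ)
  have hanti : Antitone k := fun a b hab => hmono a b hab
  have hki : (0 : ℝ) < k i := by exact_mod_cast hpos i
  have hsk' : ∀ j, 2 * (k j : ℝ) ≤ s j := fun j => by exact_mod_cast hsk j
  have hKi : (k i : ℝ) ≤ K := by simp [K]
  have hKt : K ≤ 11 * t * k i := by
    have h := hk'.trans (Nat.mul_le_mul_left 11 (sum_Ici_le_card_mul hanti i))
    simp only [K]
    exact_mod_cast h.trans_eq (mul_assoc ..).symm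
  have hS : 2 * (k i : ℝ) ≤ S := (hsk' i).trans <|
    single_le_sum (f := fun j => (s j : ℝ)) (fun _ _ => by positivity) (mem_Iic.mpr le_rfl)
  have hL : 1 ≤ logb 2 (S / k i) := one_le_logb_two_div hki hS
  have hprefix := mul_logb_two_sum_div_le (a := fun j => (k j : ℝ)) (b := fun j => (s j : ℝ))
    nonempty_Iic hki (fun j hj => by exact_mod_cast hanti (mem_Iic.mp hj)) fun j _ => hsk' j
  have hterm (j : Fin t) : 0 ≤ (k j : ℝ) * logb 2 (s j / k j) :=
    mul_nonneg (Nat.cast_nonneg _)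
      (zero_le_one.trans (one_le_logb_two_div (by exact_mod_cast hpos j) (hsk' j)))
  calc K * logb 2 (S / K) ≤ K * logb 2 (S / k i) :=
        mul_le_mul_of_nonneg_left
          (logb_le_logb_of_le one_lt_two (div_pos (by linarith) (by linarith))
            (div_le_div_of_nonneg_left (by linarith) hki hKi)) (by positivity)
    _ ≤ 11 * t * (k i * logb 2 (S / k i)) :=
        (mul_le_mul_of_nonneg_right hKt (by linarith)).trans_eq (by ring)
    _ ≤ 11 * t * (3 * ∑ j ∈ Iic i, (k j : ℝ) * logb 2 (s j / k j)) :=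
        mul_le_mul_of_nonneg_left hprefix (by positivity)
    _ = 33 * t * ∑ j ∈ Iic i, (k j : ℝ) * logb 2 (s j / k j) := by ring
    _ ≤ 33 * t * ∑ j, (k j : ℝ) * logb 2 (s j / k j) :=
        mul_le_mul_of_nonneg_left
          (sum_le_sum_of_subset_of_nonneg (subset_univ _) fun j _ _ => hterm j) (by positivity)

/-- Sketch-length bound in the iterative distance-reduction protocol: for
`k₁ ≥ ⋯ ≥ k_t ≥ 1`, `s_j ≥ 2k_j`, any `i` and residual bound `k'` with
`k' + k_i ≤ 11·∑_{j ≥ i} k_j`, one has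
`(k'+k_i)·log₂(∑_{j≤i} s_j/(k'+k_i)) ≤ 33·t·∑_j k_j·log₂(s_j/k_j)`. -/
theorem stmt_16 (t : ℕ) (ht : 1 ≤ t) (k s : Fin t → ℕ)
    (hmono : ∀ i j : Fin t, i ≤ j → k j ≤ k i)
    (hpos : ∀ i, 1 ≤ k i) (hsk : ∀ i, 2 * k i ≤ s i)
    (i : Fin t) (k' : ℕ)
    (hk' : k' + k i ≤ 11 * ∑ j ∈ Finset.Ici i, k j) :
    ((k' + k i : ℕ) : ℝ) *
        Real.logb 2 ((∑ j ∈ Finset.Iic i, (s j : ℝ)) / ((k' + k i : ℕ) : ℝ)) ≤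
      33 * (t : ℝ) * ∑ j, (k j : ℝ) * Real.logb 2 ((s j : ℝ) / (k j : ℝ)) :=
  stmt_16_general t k s hmono hpos hsk i k' hk'
end

section
/- If (k_i+k_j)·log₂((s_i+s_j)/(k_i+k_j)) needs to be compared with k_i log₂(s_i/k_i) + k_j log₂(s_j/k_j): suppose log₂(s_i/k_i) ≤ 10·log₂(s_j/k_j) and log₂(s_j/k_j) ≤ 10·log₂(s_i/k_i), with s_i ≥ 2k_i ≥ 2 and s_j ≥ 2k_j ≥ 2. Then (k_i+k_j)·log₂((s_i+s_j)/(k_i+k_j)) ≤ 20·(k_i·log₂(s_i/k_i) + k_j·log₂(s_j/k_j)). -/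
open Real

/-! Write `r = s/k`. The mediant `(s_i + s_j)/(k_i + k_j)` lies below `max r_i r_j`, so its
logarithm is at most `max (log₂ r_i) (log₂ r_j)`. Comparability
(`log₂ r_i ≤ 10 log₂ r_j ≤ 100 log₂ r_i`) makes both logarithms nonnegative and bounds that
maximum by ten times each of them, so `(k_i + k_j) · max ≤ 10 (k_i log₂ r_i + k_j log₂ r_j)`. -/

theorem div_add_div_le_max {K : Type*} [Field K] [LinearOrder K] [IsStrictOrderedRing K]
    (a c : K) {b d : K} (hb : 0 < b) (hd : 0 < d) :
    (a + c) / (b + d) ≤ max (a / b) (c / d) := by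
  have ha : a ≤ max (a / b) (c / d) * b := (div_le_iff₀ hb).mp (le_max_left _ _)
  have hc : c ≤ max (a / b) (c / d) * d := (div_le_iff₀ hd).mp (le_max_right _ _)
  rw [div_le_iff₀ (add_pos hb hd), mul_add]
  exact add_le_add ha hc

theorem Real.logb_le_max_logb_of_le_max {B x y z : ℝ} (hB : 1 < B) (hz : 0 ≤ z)
    (hmax : 0 ≤ max (logb B x) (logb B y)) (hzxy : z ≤ max x y) :
    logb B z ≤ max (logb B x) (logb B y) := by
  rcases hz.eq_or_lt with rfl | hz
  · rwa [logb_zero]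
  rcases max_choice x y with h | h <;> rw [h] at hzxy
  · exact (logb_le_logb_of_le hB hz hzxy).trans (le_max_left _ _)
  · exact (logb_le_logb_of_le hB hz hzxy).trans (le_max_right _ _)

theorem nonneg_of_le_mul_of_le_mul {x y c : ℝ} (hc : 1 < c) (hxy : x ≤ c * y)
    (hyx : y ≤ c * x) : 0 ≤ x := by
  have hx : 0 ≤ (c * c - 1) * x := by
    nlinarith [mul_le_mul_of_nonneg_left hyx (by positivity : 0 ≤ c)]
  exact nonneg_of_mul_nonneg_right hx (by nlinarith)

theorem add_mul_le_mul_add_mul_of_le_max {p q x a b c : ℝ} (hp : 0 ≤ p) (hq : 0 ≤ q)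
    (hx : x ≤ max a b) (ha : max a b ≤ c * a) (hb : max a b ≤ c * b) :
    (p + q) * x ≤ c * (p * a + q * b) := by
  nlinarith [mul_le_mul_of_nonneg_left (hx.trans ha) hp,
    mul_le_mul_of_nonneg_left (hx.trans hb) hq]

theorem stmt_18_general (si ki sj kj : ℕ)
    (hki : 1 ≤ ki) (hkj : 1 ≤ kj)
    (h1 : Real.logb 2 ((si : ℝ) / ki) ≤ 10 * Real.logb 2 ((sj : ℝ) / kj))
    (h2 : Real.logb 2 ((sj : ℝ) / kj) ≤ 10 * Real.logb 2 ((si : ℝ) / ki)) :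
    ((ki : ℝ) + kj) * Real.logb 2 (((si : ℝ) + sj) / ((ki : ℝ) + kj)) ≤
      20 * ((ki : ℝ) * Real.logb 2 ((si : ℝ) / ki) +
        (kj : ℝ) * Real.logb 2 ((sj : ℝ) / kj)) := by
  have hki' : (0 : ℝ) < ki := Nat.cast_pos.mpr hki
  have hkj' : (0 : ℝ) < kj := Nat.cast_pos.mpr hkj
  have ha : 0 ≤ logb 2 ((si : ℝ) / ki) := nonneg_of_le_mul_of_le_mul (by norm_num) h1 h2
  have hb : 0 ≤ logb 2 ((sj : ℝ) / kj) := nonneg_of_le_mul_of_le_mul (by norm_num) h2 h1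
  have hmerged := logb_le_max_logb_of_le_max one_lt_two (by positivity)
    (ha.trans (le_max_left _ _)) (div_add_div_le_max (si : ℝ) sj hki' hkj')
  calc ((ki : ℝ) + kj) * logb 2 (((si : ℝ) + sj) / ((ki : ℝ) + kj))
      ≤ 10 * ((ki : ℝ) * logb 2 ((si : ℝ) / ki) + (kj : ℝ) * logb 2 ((sj : ℝ) / kj)) :=
        add_mul_le_mul_add_mul_of_le_max hki'.le hkj'.le hmerged
          (max_le (by linarith) h2) (max_le h1 (by linarith))
    _ ≤ 20 * ((ki : ℝ) * logb 2 ((si : ℝ) / ki) + (kj : ℝ) * logb 2 ((sj : ℝ) / kj)) :=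
        mul_le_mul_of_nonneg_right (by norm_num) (by positivity)

/-- Merging two sets whose ratios have comparable logarithms: if
`log₂(s_i/k_i) ≤ 10·log₂(s_j/k_j)` and `log₂(s_j/k_j) ≤ 10·log₂(s_i/k_i)`, with
`s_i ≥ 2k_i ≥ 2` and `s_j ≥ 2k_j ≥ 2`, then
`(k_i+k_j)·log₂((s_i+s_j)/(k_i+k_j)) ≤ 20·(k_i·log₂(s_i/k_i) + k_j·log₂(s_j/k_j))`. -/
theorem stmt_18 (si ki sj kj : ℕ)
    (hki : 1 ≤ ki) (hkj : 1 ≤ kj) (hsi : 2 * ki ≤ si) (hsj : 2 * kj ≤ sj)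
    (h1 : Real.logb 2 ((si : ℝ) / ki) ≤ 10 * Real.logb 2 ((sj : ℝ) / kj))
    (h2 : Real.logb 2 ((sj : ℝ) / kj) ≤ 10 * Real.logb 2 ((si : ℝ) / ki)) :
    ((ki : ℝ) + kj) * Real.logb 2 (((si : ℝ) + sj) / ((ki : ℝ) + kj)) ≤
      20 * ((ki : ℝ) * Real.logb 2 ((si : ℝ) / ki) +
        (kj : ℝ) * Real.logb 2 ((sj : ℝ) / kj)) :=
  stmt_18_general si ki sj kj hki hkj h1 h2
end
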